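/- arXiv:2506.16253 — 2 statements merged into one kernel-verified Lean document; each statement's English description precedes it below -/
import Mathlib

section
/- For all integers K ≥ 1 and H ≥ 1, the Bellman–Pareto frontier equals the set of residual loss vectors of normalized states: 𝒱_{H,K} = { (V H s)·𝟏 − s | s : Fin K → ℝ with min_{k ∈ Fin K} s k = 0 }. -/
open scoped BigOperators

noncomputable section

def simplex (K : ℕ) : Set (Fin K → ℝ) :=
  {q | (∀ k, 0 ≤ q k) ∧ ∑ k, q k = 1}

def simplexInt (K : ℕ) : Set (Fin K → ℝ) :=
  {r | (∀ k, 0 < r k) ∧ ∑ k, r k = 1}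

noncomputable def V (K : ℕ) : ℕ → (Fin K → ℝ) → ℝ
  | 0, s => ⨆ k, s k
  | H + 1, s =>
      sInf ((fun r : Fin K → ℝ =>
        sSup ((fun q : Fin K → ℝ => V K H (fun k => s k + q k / r k)) '' simplex K))
        '' simplexInt K)

/-- A vector `v` is `(H'+1)`-achievable if there is a bookmaking strategy `Ψ`
(mapping each round `h` and each bet history to odds in the open simplex) such that
for every decisive bet sequence `q`, the total payout committed to the outcome of
the last bet equals the corresponding coordinate of `v`. -/
def Achievable (K H' : ℕ) (v : Fin K → ℝ) : Prop :=
  ∃ Ψ : (h : Fin (H' + 1)) → (Fin h.val → Fin K) → (Fin K → ℝ),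
    (∀ h hist, Ψ h hist ∈ simplexInt K) ∧
    ∀ q : Fin (H' + 1) → Fin K,
      (∑ h : Fin (H' + 1),
        if q h = q (Fin.last H')
        then 1 / Ψ h (fun i => q (Fin.castLE h.isLt.le i)) (q (Fin.last H'))
        else 0) = v (q (Fin.last H'))

/-!
The value function `V H` is monotone, convex, `1`-Lipschitz and commutes with adding
constants; by convexity the adversary's best reply to odds `r` is a pure bet, so
`V (H+1) s = inf_r max_k V H (s + e_k / r_k)`. Along each coordinate, `t ↦ V H (s + t e_k)`
is continuous and nondecreasing, so its zero set is an interval `[a_k, b_k]`. If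
`V (H+1) s = 0` then `∑ 1/b_k ≤ 1 ≤ ∑ 1/a_k`, since otherwise normalising `1/b` (resp. `1/a`)
would give `V (H+1) s > 0` (resp. `< 0`); hence some `r ∈ Δ°` has `a_k ≤ 1/r_k ≤ b_k`, i.e.
`V H (s + e_k / r_k) = 0` for every `k`; conversely such equalizing odds force
`V (H+1) s = 0`. Peeling off the first round of a strategy gives the same recursion for
achievable vectors, so `v` is achievable iff `V (H+1) (-v) = 0`, and translation invariance
of `V` turns this into the frontier formula.
-/

open Finset

lemma one_le_add_div_mul_add_mul {a b x y : ℝ} (ha : 0 ≤ a) (hb : 0 ≤ b) (hab : a + b = 1)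
    (hx : 0 < x) (hy : 0 < y) : 1 ≤ (a / x + b / y) * (a * x + b * y) := by
  rw [← one_pow 2, ← hab, div_add_div _ _ hx.ne' hy.ne', div_mul_eq_mul_div,
    le_div_iff₀ (mul_pos hx hy)]
  nlinarith [mul_nonneg (mul_nonneg ha hb) (sq_nonneg (x - y))]

lemma exists_Icc_eq_zero_of_monotone {f : ℝ → ℝ} (hmono : Monotone f) (hf : Continuous f)
    {x y : ℝ} (hx : f x < 0) (hy : 0 < f y) :
    ∃ a b, x < a ∧ a ≤ b ∧ (∀ t < a, f t < 0) ∧ (∀ t ∈ Set.Icc a b, f t = 0) ∧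
      ∀ t, b < t → 0 < f t := by
  set Z := f ⁻¹' {0}
  have hZ : IsClosed Z := isClosed_singleton.preimage hf
  have hxZ : ∀ t ∈ Z, x < t := fun t ht => hmono.reflect_lt (hx.trans_eq ht.symm)
  have hZy : ∀ t ∈ Z, t < y := fun t ht => hmono.reflect_lt (ht.trans_lt hy)
  obtain ⟨z, -, hz⟩ := intermediate_value_Icc (hmono.reflect_lt (hx.trans hy)).le
    hf.continuousOn ⟨hx.le, hy.le⟩
  have hne : Z.Nonempty := ⟨z, hz⟩
  have hbddB : BddBelow Z := ⟨x, fun t ht => (hxZ t ht).le⟩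
  have hbddA : BddAbove Z := ⟨y, fun t ht => (hZy t ht).le⟩
  have ha : f (sInf Z) = 0 := hZ.csInf_mem hne hbddB
  have hb : f (sSup Z) = 0 := hZ.csSup_mem hne hbddA
  refine ⟨sInf Z, sSup Z, hxZ _ ha, csInf_le_csSup hne hbddB hbddA, fun t ht => ?_,
    fun t ht => le_antisymm (hb ▸ hmono ht.2) (ha ▸ hmono ht.1), fun t ht => ?_⟩
  · exact lt_of_le_of_ne (ha ▸ hmono ht.le) fun h => ht.not_ge (csInf_le hbddB h)
  · exact lt_of_le_of_ne' (hb ▸ hmono ht.le) fun h => ht.not_ge (le_csSup hbddA h)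

lemma exists_sum_eq_of_le {ι : Type*} [Fintype ι] {a b : ι → ℝ} (hab : a ≤ b) {c : ℝ}
    (hac : ∑ i, a i ≤ c) (hcb : c ≤ ∑ i, b i) : ∃ x, a ≤ x ∧ x ≤ b ∧ ∑ i, x i = c := by
  obtain ⟨θ, ⟨hθ0, hθ1⟩, hθ⟩ := intermediate_value_Icc (f := fun θ => ∑ i, (a i + θ * (b i - a i)))
    zero_le_one (by fun_prop) (by simpa using And.intro hac hcb)
  refine ⟨fun i => a i + θ * (b i - a i), fun i => ?_, fun i => ?_, hθ⟩ <;>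
    nlinarith [hab i]

section ValueFunction

variable {K : ℕ}

lemma single_one_mem_simplex (k : Fin K) : Pi.single k 1 ∈ simplex K :=
  ⟨fun j => by by_cases h : j = k <;> simp [h], by simp⟩

lemma le_one_of_mem_simplexInt {r : Fin K → ℝ} (hr : r ∈ simplexInt K) (k : Fin K) :
    r k ≤ 1 :=
  hr.2 ▸ single_le_sum (fun j _ => (hr.1 j).le) (mem_univ k)

def adversaryValue (K H : ℕ) (s r : Fin K → ℝ) : ℝ :=
  sSup ((fun q : Fin K → ℝ => V K H (fun k => s k + q k / r k)) '' simplex K)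

lemma V_succ (H : ℕ) (s : Fin K → ℝ) :
    V K (H + 1) s = sInf (adversaryValue K H s '' simplexInt K) := rfl

variable {H : ℕ} {s r q : Fin K → ℝ} {c : ℝ}

lemma le_adversaryValue (hmono : Monotone (V K H)) (hr : r ∈ simplexInt K)
    (hq : q ∈ simplex K) : V K H (fun k => s k + q k / r k) ≤ adversaryValue K H s r := by
  refine le_csSup ⟨V K H fun k => s k + 1 / r k, ?_⟩ ⟨q, hq, rfl⟩
  rintro _ ⟨p, hp, rfl⟩
  refine hmono fun k => add_le_add_right ?_ _
  exact div_le_div_of_nonneg_right (hp.2 ▸ single_le_sum (fun j _ => hp.1 j) (mem_univ k))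
    (hr.1 k).le

variable [NeZero K]

lemma div_sum_mem_simplexInt {x : Fin K → ℝ} (hx : ∀ k, 0 < x k) :
    (fun k => x k / ∑ j, x j) ∈ simplexInt K := by
  have hS : 0 < ∑ j, x j := sum_pos (fun j _ => hx j) univ_nonempty
  exact ⟨fun k => div_pos (hx k) hS, by rw [← sum_div, div_self hS.ne']⟩

lemma uniform_mem_simplexInt : (fun _ => (K : ℝ)⁻¹) ∈ simplexInt K := by
  have hK : (K : ℝ) ≠ 0 := Nat.cast_ne_zero.2 (NeZero.ne K)
  exact ⟨fun _ => by positivity, by simp [hK]⟩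

lemma adversaryValue_le (h : ∀ q ∈ simplex K, V K H (fun k => s k + q k / r k) ≤ c) :
    adversaryValue K H s r ≤ c :=
  csSup_le ⟨_, _, single_one_mem_simplex 0, rfl⟩ (Set.forall_mem_image.2 h)

lemma V_succ_le_adversaryValue (hmono : Monotone (V K H)) (hr : r ∈ simplexInt K) :
    V K (H + 1) s ≤ adversaryValue K H s r := by
  refine csInf_le ⟨V K H s, ?_⟩ ⟨r, hr, rfl⟩
  rintro _ ⟨r', hr', rfl⟩
  refine le_trans (hmono fun k => le_add_of_nonneg_right ?_)
    (le_adversaryValue hmono hr' (single_one_mem_simplex 0))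
  exact div_nonneg ((single_one_mem_simplex 0).1 k) (hr'.1 k).le

lemma le_V_succ (h : ∀ r ∈ simplexInt K, c ≤ adversaryValue K H s r) : c ≤ V K (H + 1) s :=
  le_csInf ⟨_, _, uniform_mem_simplexInt, rfl⟩ (Set.forall_mem_image.2 h)

theorem monotone_V : ∀ H, Monotone (V K H)
  | 0 => fun _ _ hst => ciSup_mono (Finite.bddAbove_range _) hst
  | H + 1 => fun _ _ hst => le_V_succ fun _ hr =>
      (V_succ_le_adversaryValue (monotone_V H) hr).trans <| adversaryValue_le fun _ hq =>
        (monotone_V H fun k => add_le_add_left (hst k) _).trans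
          (le_adversaryValue (monotone_V H) hr hq)

lemma V_add_const_le : ∀ H (s : Fin K → ℝ) (c : ℝ), V K H (fun k => s k + c) ≤ V K H s + c
  | 0, s, c => ciSup_le fun k => add_le_add_left (le_ciSup (Finite.bddAbove_range s) k) c
  | H + 1, s, c => by
    suffices ∀ r ∈ simplexInt K, V K (H + 1) (fun k => s k + c) - c ≤ adversaryValue K H s r by
      linarith [le_V_succ this]
    intro r hr
    rw [sub_le_iff_le_add]
    refine (V_succ_le_adversaryValue (monotone_V H) hr).trans (adversaryValue_le fun q hq => ?_)
    calc V K H (fun k => s k + c + q k / r k)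
        = V K H (fun k => (s k + q k / r k) + c) := by congr 1; ext k; ring
      _ ≤ V K H (fun k => s k + q k / r k) + c := V_add_const_le H _ c
      _ ≤ adversaryValue K H s r + c := by gcongr; exact le_adversaryValue (monotone_V H) hr hq

theorem V_add_const (H : ℕ) (s : Fin K → ℝ) (c : ℝ) :
    V K H (fun k => s k + c) = V K H s + c := by
  refine le_antisymm (V_add_const_le H s c) ?_
  have := V_add_const_le H (fun k => s k + c) (-c)
  simp only [add_neg_cancel_right] at this
  linarith

lemma V_add_inv_card_le_V_succ (H : ℕ) (s : Fin K → ℝ) : V K H s + (K : ℝ)⁻¹ ≤ V K (H + 1) s :=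
  le_V_succ fun r hr => calc
    V K H s + (K : ℝ)⁻¹ = V K H (fun k => s k + (K : ℝ)⁻¹) := (V_add_const H s _).symm
    _ ≤ V K H (fun k => s k + (K : ℝ)⁻¹ / r k) := monotone_V H fun k =>
        add_le_add_right
          (le_div_self (inv_nonneg.2 K.cast_nonneg) (hr.1 k) (le_one_of_mem_simplexInt hr k)) _
    _ ≤ adversaryValue K H s r :=
        le_adversaryValue (monotone_V H) hr ⟨fun k => (uniform_mem_simplexInt.1 k).le,
          uniform_mem_simplexInt.2⟩

lemma V_lt_V_succ (H : ℕ) (s : Fin K → ℝ) : V K H s < V K (H + 1) s := by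
  have : (0 : ℝ) < (K : ℝ)⁻¹ := by have := NeZero.pos K; positivity
  linarith [V_add_inv_card_le_V_succ H s]

lemma le_V (s : Fin K → ℝ) (k : Fin K) : ∀ H, s k ≤ V K H s
  | 0 => le_ciSup (Finite.bddAbove_range s) k
  | H + 1 => (le_V s k H).trans (V_lt_V_succ H s).le

theorem lipschitzWith_V (H : ℕ) : LipschitzWith 1 (V K H) :=
  LipschitzWith.of_le_add fun s t => calc
    V K H s ≤ V K H (fun k => t k + dist s t) := monotone_V H fun k => by
        linarith [le_abs_self (s k - t k), Real.dist_eq (s k) (t k) ▸ dist_le_pi_dist s t k]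
    _ = V K H t + dist s t := V_add_const H t _

/-- The odds `r ∝ (a / rs + b / rt)⁻¹` pay out no more than the `(a, b)`-mixture of the payouts of
`rs` and `rt`; they exist because `∑ (a / rs + b / rt)⁻¹ ≤ ∑ (a rs + b rt) = 1`
(Cauchy–Schwarz). -/
lemma V_succ_le_adversaryValue_of_convexOn (hconv : ConvexOn ℝ Set.univ (V K H))
    {t rs rt : Fin K → ℝ} {a b : ℝ} (ha : 0 ≤ a) (hb : 0 ≤ b) (hab : a + b = 1)
    (hrs : rs ∈ simplexInt K) (hrt : rt ∈ simplexInt K) :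
    V K (H + 1) (a • s + b • t) ≤ a * adversaryValue K H s rs + b * adversaryValue K H t rt := by
  set u : Fin K → ℝ := fun k => a / rs k + b / rt k
  have hu : ∀ k, 1 ≤ u k * (a * rs k + b * rt k) := fun k =>
    one_le_add_div_mul_add_mul ha hb hab (hrs.1 k) (hrt.1 k)
  have hu_pos : ∀ k, 0 < u k := fun k =>
    pos_of_mul_pos_left (one_pos.trans_le (hu k)) (by nlinarith [hrs.1 k, hrt.1 k])
  have hsum : ∑ k, (u k)⁻¹ ≤ 1 := calc
    ∑ k, (u k)⁻¹ ≤ ∑ k, (a * rs k + b * rt k) :=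
      sum_le_sum fun k _ => (inv_le_iff_one_le_mul₀' (hu_pos k)).2 (hu k)
    _ = 1 := by rw [sum_add_distrib, ← mul_sum, ← mul_sum, hrs.2, hrt.2, mul_one, mul_one, hab]
  set r : Fin K → ℝ := fun k => (u k)⁻¹ / ∑ j, (u j)⁻¹
  have hr : r ∈ simplexInt K := div_sum_mem_simplexInt fun k => inv_pos.2 (hu_pos k)
  have hru : ∀ k, (r k)⁻¹ ≤ u k := fun k => by
    rwa [inv_div, div_le_iff₀ (inv_pos.2 (hu_pos k)), mul_inv_cancel₀ (hu_pos k).ne']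
  refine (V_succ_le_adversaryValue (monotone_V H) hr).trans (adversaryValue_le fun q hq => ?_)
  calc V K H (fun k => (a • s + b • t) k + q k / r k)
      ≤ V K H (a • (fun k => s k + q k / rs k) + b • (fun k => t k + q k / rt k)) :=
        monotone_V H fun k => by
          have : q k / r k ≤ q k * u k := mul_le_mul_of_nonneg_left (hru k) (hq.1 k)
          simp only [Pi.add_apply, Pi.smul_apply, smul_eq_mul, u] at this ⊢
          linarith [show q k * (a / rs k + b / rt k) = a * (q k / rs k) + b * (q k / rt k) by ring]
    _ ≤ a * V K H (fun k => s k + q k / rs k) + b * V K H (fun k => t k + q k / rt k) :=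
        hconv.2 trivial trivial ha hb hab
    _ ≤ a * adversaryValue K H s rs + b * adversaryValue K H t rt := by
        gcongr <;> exact le_adversaryValue (monotone_V H) ‹_› hq

theorem convexOn_V : ∀ H, ConvexOn ℝ Set.univ (V K H)
  | 0 => ⟨convex_univ, fun s _ t _ a b ha hb _ => ciSup_le fun k => by
      simp only [Pi.add_apply, Pi.smul_apply, smul_eq_mul]
      gcongr <;> exact le_ciSup (Finite.bddAbove_range _) k⟩
  | H + 1 => ⟨convex_univ, fun s _ t _ a b ha hb hab => by
      refine le_of_forall_pos_le_add fun ε hε => ?_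
      have hne : ∀ s, (adversaryValue K H s '' simplexInt K).Nonempty :=
        fun _ => ⟨_, _, uniform_mem_simplexInt, rfl⟩
      obtain ⟨_, ⟨rs, hrs, rfl⟩, hs⟩ :=
        exists_lt_of_csInf_lt (hne s) (lt_add_of_pos_right (V K (H + 1) s) hε)
      obtain ⟨_, ⟨rt, hrt, rfl⟩, ht⟩ :=
        exists_lt_of_csInf_lt (hne t) (lt_add_of_pos_right (V K (H + 1) t) hε)
      calc V K (H + 1) (a • s + b • t)
          ≤ a * adversaryValue K H s rs + b * adversaryValue K H t rt :=
            V_succ_le_adversaryValue_of_convexOn (convexOn_V H) ha hb hab hrs hrt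
        _ ≤ a * (V K (H + 1) s + ε) + b * (V K (H + 1) t + ε) := by gcongr
        _ = a • V K (H + 1) s + b • V K (H + 1) t + ε := by
            simp only [smul_eq_mul]; linear_combination ε * hab⟩

/-- By convexity of `V H`, the adversary's best reply to odds `r` is a pure bet. -/
lemma V_succ_le_iSup (hr : r ∈ simplexInt K) :
    V K (H + 1) s ≤ ⨆ k, V K H (s + Pi.single k (r k)⁻¹) := by
  refine (V_succ_le_adversaryValue (monotone_V H) hr).trans (adversaryValue_le fun q hq => ?_)
  have hq_sum : (fun k => s k + q k / r k) = ∑ k, q k • (s + Pi.single k (r k)⁻¹) := by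
    ext j
    simp [Finset.sum_apply, Pi.single_apply, sum_add_distrib, ← sum_mul, hq.2, div_eq_mul_inv]
  calc V K H (fun k => s k + q k / r k)
      ≤ ∑ k, q k • V K H (s + Pi.single k (r k)⁻¹) := hq_sum ▸
        (convexOn_V H).map_sum_le (fun k _ => hq.1 k) hq.2 fun _ _ => trivial
    _ ≤ ∑ k, q k • ⨆ k, V K H (s + Pi.single k (r k)⁻¹) := sum_le_sum fun k _ =>
        smul_le_smul_of_nonneg_left
          (le_ciSup (f := fun k => V K H (s + Pi.single k (r k)⁻¹)) (Finite.bddAbove_range _) k)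
          (hq.1 k)
    _ = ⨆ k, V K H (s + Pi.single k (r k)⁻¹) := by rw [← sum_smul, hq.2, one_smul]

lemma le_V_succ_of_forall_exists
    (h : ∀ r ∈ simplexInt K, ∃ k, c ≤ V K H (s + Pi.single k (r k)⁻¹)) : c ≤ V K (H + 1) s :=
  le_V_succ fun r hr => by
    obtain ⟨k, hk⟩ := h r hr
    refine hk.trans (le_of_eq_of_le ?_
      (le_adversaryValue (monotone_V H) hr (single_one_mem_simplex k)))
    congr 1
    ext j
    by_cases hj : j = k <;> simp [hj]

lemma monotone_V_add_single (H : ℕ) (s : Fin K → ℝ) (k : Fin K) :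
    Monotone fun t => V K H (s + Pi.single k t) :=
  (monotone_V H).comp fun _ _ h => add_le_add_right (Pi.single_mono k h) s

lemma continuous_V_add_single (H : ℕ) (s : Fin K → ℝ) (k : Fin K) :
    Continuous fun t => V K H (s + Pi.single k t) :=
  (lipschitzWith_V H).continuous.comp
    (continuous_const.add (continuous_single (A := fun _ : Fin K => ℝ) k))

end ValueFunction

section Equalizer

variable {K : ℕ} [NeZero K] {H : ℕ} {s : Fin K → ℝ}

lemma one_le_sum_inv_of_nonneg_V_succ (hV : 0 ≤ V K (H + 1) s) {a : Fin K → ℝ}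
    (ha : ∀ k, 0 < a k) (hneg : ∀ k, ∀ t < a k, V K H (s + Pi.single k t) < 0) :
    1 ≤ ∑ k, (a k)⁻¹ := by
  by_contra! hlt
  set r : Fin K → ℝ := fun k => (a k)⁻¹ / ∑ j, (a j)⁻¹
  have hr : r ∈ simplexInt K := div_sum_mem_simplexInt fun k => inv_pos.2 (ha k)
  have hra : ∀ k, (r k)⁻¹ < a k := fun k => by
    rwa [inv_div, div_lt_iff₀ (inv_pos.2 (ha k)), mul_inv_cancel₀ (ha k).ne']
  obtain ⟨k, hk⟩ := exists_eq_ciSup_of_finite (f := fun k => V K H (s + Pi.single k (r k)⁻¹))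
  linarith [V_succ_le_iSup (H := H) (s := s) hr, hneg k _ (hra k)]

lemma sum_inv_le_one_of_V_succ_nonpos (hV : V K (H + 1) s ≤ 0) {b : Fin K → ℝ}
    (hb : ∀ k, 0 < b k) (hpos : ∀ k t, b k < t → 0 < V K H (s + Pi.single k t)) :
    ∑ k, (b k)⁻¹ ≤ 1 := by
  by_contra! hgt
  set y : Fin K → ℝ := fun k => (b k)⁻¹ / ∑ j, (b j)⁻¹
  have hy : y ∈ simplexInt K := div_sum_mem_simplexInt fun k => inv_pos.2 (hb k)
  have hby : ∀ k, b k < (y k)⁻¹ := fun k => by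
    rwa [inv_div, lt_div_iff₀ (inv_pos.2 (hb k)), mul_inv_cancel₀ (hb k).ne']
  obtain ⟨k₀, hk₀⟩ := Finite.exists_min fun k => V K H (s + Pi.single k (y k)⁻¹)
  have : V K H (s + Pi.single k₀ (y k₀)⁻¹) ≤ V K (H + 1) s :=
    le_V_succ_of_forall_exists fun r hr => by
      obtain ⟨k, -, hk⟩ := exists_le_of_sum_le univ_nonempty (hr.2.trans hy.2.symm).le
      exact ⟨k, (hk₀ k).trans (monotone_V_add_single H s k (inv_anti₀ (hr.1 k) hk))⟩
  linarith [hpos k₀ _ (hby k₀)]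

theorem V_succ_eq_zero_iff :
    V K (H + 1) s = 0 ↔ ∃ r ∈ simplexInt K, ∀ k, V K H (s + Pi.single k (r k)⁻¹) = 0 := by
  constructor
  · intro hV
    have hneg : ∀ k, V K H (s + Pi.single k 0) < 0 := fun k => by
      simpa [hV] using V_lt_V_succ H s
    have hpos : ∀ k, 0 < V K H (s + Pi.single k (1 - s k)) := fun k => by
      have := le_V (s + Pi.single k (1 - s k)) k H
      rw [Pi.add_apply, Pi.single_eq_same] at this
      linarith
    choose a b ha hab hlt hzero hgt using fun k => exists_Icc_eq_zero_of_monotone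
      (monotone_V_add_single H s k) (continuous_V_add_single H s k) (hneg k) (hpos k)
    have hb : ∀ k, 0 < b k := fun k => (ha k).trans_le (hab k)
    obtain ⟨r, hbr, hra, hr⟩ := exists_sum_eq_of_le (a := fun k => (b k)⁻¹)
      (b := fun k => (a k)⁻¹) (fun k => inv_anti₀ (ha k) (hab k))
      (sum_inv_le_one_of_V_succ_nonpos hV.le hb hgt)
      (one_le_sum_inv_of_nonneg_V_succ hV.ge ha hlt)
    have hr_pos : ∀ k, 0 < r k := fun k => (inv_pos.2 (hb k)).trans_le (hbr k)
    exact ⟨r, ⟨hr_pos, hr⟩, fun k => hzero k _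
      ⟨(le_inv_comm₀ (ha k) (hr_pos k)).2 (hra k), (inv_le_comm₀ (hb k) (hr_pos k)).1 (hbr k)⟩⟩
  · rintro ⟨r, hr, h0⟩
    refine le_antisymm ((V_succ_le_iSup hr).trans_eq (by simp [h0]))
      (le_V_succ_of_forall_exists fun r' hr' => ?_)
    obtain ⟨k, -, hk⟩ := exists_le_of_sum_le univ_nonempty (hr'.2.trans hr.2.symm).le
    exact ⟨k, (h0 k).ge.trans (monotone_V_add_single H s k (inv_anti₀ (hr'.1 k) hk))⟩

end Equalizer

section Strategy

variable {K : ℕ}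

abbrev Strategy (K n : ℕ) : Type := (h : Fin n) → (Fin h.val → Fin K) → Fin K → ℝ

def payout {n : ℕ} (Ψ : Strategy K (n + 1)) (q : Fin (n + 1) → Fin K) : ℝ :=
  ∑ h : Fin (n + 1), if q h = q (Fin.last n)
    then 1 / Ψ h (fun i => q (Fin.castLE h.isLt.le i)) (q (Fin.last n)) else 0

/-- Odds `r` in the first round, then `Ψ' k` on the remaining rounds after a first bet `k`. -/
def Strategy.cons {n : ℕ} (r : Fin K → ℝ) (Ψ' : Fin K → Strategy K (n + 1)) :
    Strategy K (n + 2) :=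
  fun h => Fin.cases (motive := fun h : Fin (n + 2) => (Fin h.val → Fin K) → Fin K → ℝ)
    (fun _ => r) (fun h (hist : Fin (h.val + 1) → Fin K) => Ψ' (hist 0) h (Fin.tail hist)) h

lemma payout_cons {n : ℕ} (Ψ : Strategy K (n + 2)) (k : Fin K) (q : Fin (n + 1) → Fin K) :
    payout Ψ (Fin.cons k q) =
      (if k = q (Fin.last n) then 1 / Ψ 0 Fin.elim0 (q (Fin.last n)) else 0) +
        payout (fun h hist => Ψ h.succ (Fin.cons k hist)) q := by
  rw [payout, Fin.sum_univ_succ, Fin.cons_last]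
  congr 1
  · congr! 3
    exact congrArg (Ψ 0) (funext fun i => i.elim0)
  · refine sum_congr rfl fun h _ => ?_
    simp only [Fin.cons_succ]
    congr
    ext i
    cases i using Fin.cases <;> rfl

lemma achievable_zero_iff {v : Fin K → ℝ} : Achievable K 0 v ↔ ∃ r ∈ simplexInt K, v = r⁻¹ := by
  constructor
  · rintro ⟨Ψ, hΨ, hpay⟩
    refine ⟨Ψ 0 Fin.elim0, hΨ _ _, funext fun k => ?_⟩
    have : payout Ψ (fun _ => k) = v k := hpay _
    simpa [payout, Subsingleton.elim _ (Fin.elim0 : Fin 0 → Fin K), eq_comm] using this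
  · rintro ⟨r, hr, rfl⟩
    exact ⟨fun _ _ => r, fun _ _ => hr, fun q => by simp [Fin.last_zero]⟩

lemma ite_one_div_eq_single (r : Fin K → ℝ) (k j : Fin K) :
    (if k = j then 1 / r j else 0) = (Pi.single k (r k)⁻¹ : Fin K → ℝ) j := by
  by_cases h : k = j
  · subst h
    simp
  · rw [if_neg h, Pi.single_eq_of_ne (Ne.symm h)]

lemma achievable_succ_iff {n : ℕ} {v : Fin K → ℝ} :
    Achievable K (n + 1) v ↔
      ∃ r ∈ simplexInt K, ∀ k, Achievable K n (v - Pi.single k (r k)⁻¹) := by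
  constructor
  · rintro ⟨Ψ, hΨ, hpay⟩
    refine ⟨Ψ 0 Fin.elim0, hΨ _ _, fun k =>
      ⟨fun h hist => Ψ h.succ (Fin.cons k hist), fun _ _ => hΨ _ _, fun q => ?_⟩⟩
    have : payout Ψ (Fin.cons k q) = v ((Fin.cons k q : Fin (n + 2) → Fin K) (Fin.last (n + 1))) :=
      hpay _
    rw [payout_cons, Fin.cons_last, ite_one_div_eq_single] at this
    exact eq_sub_of_add_eq' this
  · rintro ⟨r, hr, hach⟩
    choose Ψ' hΨ' hpay' using hach
    refine ⟨Strategy.cons r Ψ', fun h => ?_, fun q => ?_⟩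
    · cases h using Fin.cases
      exacts [fun _ => hr, fun _ => hΨ' _ _ _]
    · change payout _ q = _
      rw [← Fin.cons_self_tail q, payout_cons, Fin.cons_last]
      have : payout (Ψ' (q 0)) (Fin.tail q) = _ := hpay' (q 0) (Fin.tail q)
      rw [Pi.sub_apply, ← ite_one_div_eq_single] at this
      change _ + payout (Ψ' (q 0)) (Fin.tail q) = _
      rw [this]
      exact add_sub_cancel _ _

end Strategy

section Frontier

variable {K : ℕ} [NeZero K]

lemma V_one_neg_eq_zero_iff {v : Fin K → ℝ} : V K 1 (-v) = 0 ↔ ∃ r ∈ simplexInt K, v = r⁻¹ := by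
  constructor
  · intro hV
    have hv : ∀ j, 0 < v j := fun j => by
      linarith [le_V (-v) j 0, V_lt_V_succ 0 (-v), Pi.neg_apply v j]
    obtain ⟨r, hr, h0⟩ := V_succ_eq_zero_iff.1 hV
    refine ⟨r, hr, funext fun k => ?_⟩
    obtain ⟨j, hj⟩ := exists_eq_ciSup_of_finite (f := -v + Pi.single k (r k)⁻¹)
    have hj0 : (-v + Pi.single k (r k)⁻¹ : Fin K → ℝ) j = 0 := hj.trans (h0 k)
    by_cases hjk : j = k
    · subst hjk
      simp only [Pi.add_apply, Pi.neg_apply, Pi.single_eq_same] at hj0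
      simp only [Pi.inv_apply]
      linarith
    · simp only [Pi.add_apply, Pi.neg_apply, Pi.single_eq_of_ne hjk] at hj0
      linarith [hv j]
  · rintro ⟨r, hr, rfl⟩
    refine V_succ_eq_zero_iff.2 ⟨r, hr, fun k => le_antisymm (ciSup_le fun j => ?_)
      (le_ciSup_of_le (Finite.bddAbove_range _) k (by simp))⟩
    by_cases hjk : j = k
    · simp [hjk]
    · simp [Pi.single_eq_of_ne hjk, (hr.1 j).le]

theorem achievable_iff_V_neg_eq_zero : ∀ n (v : Fin K → ℝ), Achievable K n v ↔ V K (n + 1) (-v) = 0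
  | 0, _ => achievable_zero_iff.trans V_one_neg_eq_zero_iff.symm
  | n + 1, v => by
    rw [achievable_succ_iff, V_succ_eq_zero_iff]
    have hneg : ∀ w : Fin K → ℝ, -(v - w) = -v + w := fun w => by abel
    simp only [achievable_iff_V_neg_eq_zero n, hneg]

end Frontier

/-- The Bellman–Pareto frontier (the set of `H`-achievable vectors, `H = H'+1 ≥ 1`)
equals the set of residual loss vectors of normalized states. -/
theorem bellman_pareto_frontier (K H' : ℕ) (hK : 1 ≤ K) :
    {v : Fin K → ℝ | Achievable K H' v} =
      {w : Fin K → ℝ | ∃ s : Fin K → ℝ, (⨅ k, s k) = 0 ∧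
        w = fun k => V K (H' + 1) s - s k} := by
  have : NeZero K := ⟨by omega⟩
  ext v
  change Achievable K H' v ↔ _
  rw [achievable_iff_V_neg_eq_zero]
  constructor
  · intro hv
    obtain ⟨m, hm⟩ := Finite.exists_max v
    refine ⟨fun k => (-v) k + v m, le_antisymm ?_ (le_ciInf fun k => ?_), funext fun k => ?_⟩
    · exact ciInf_le_of_le (Finite.bddBelow_range _) m (by simp)
    · simp only [Pi.neg_apply]
      linarith [hm k]
    · rw [V_add_const, hv]
      simp
  · rintro ⟨s, -, rfl⟩
    have : -(fun k => V K (H' + 1) s - s k) = fun k => s k + -V K (H' + 1) s := by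
      ext k
      simp only [Pi.neg_apply]
      ring
    rw [this, V_add_const, add_neg_cancel]
end
end

section
/- For all integers H ≥ 1 and K ≥ 1, every v : Fin K → ℝ and every k ∈ Fin K: D_{H,K}(v) = v k · D_{H,K−1}(v⁻ᵏ) − H · D_{H−1,K−1}(v⁻ᵏ). -/
open scoped BigOperators

noncomputable section

/-- Rising factorial `a^{(j)} = a (a+1) ⋯ (a+j-1)`. -/
def rise (a : ℝ) (j : ℕ) : ℝ := ∏ i ∈ Finset.range j, (a + i)

/-- Elementary symmetric polynomial of degree `m` in the coordinates of `v`. -/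
def esymm {K : ℕ} (m : ℕ) (v : Fin K → ℝ) : ℝ :=
  ∑ S ∈ Finset.univ.powersetCard m, ∏ k ∈ S, v k

/-- `D_{H,K}(v) = ∑_{m=0}^K (−H)^{(K−m)} σ_m(v)`. -/
def D (H K : ℕ) (v : Fin K → ℝ) : ℝ :=
  ∑ m ∈ Finset.range (K + 1), rise (-(H : ℝ)) (K - m) * esymm m v

lemma rise_succ (a : ℝ) (j : ℕ) : rise a (j + 1) = a * rise (a + 1) j := by
  unfold rise
  rw [Finset.prod_range_succ' (fun i => (a + i))]
  push_cast
  rw [add_zero, mul_comm]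
  congr 1
  exact Finset.prod_congr rfl (fun i _ => by ring)

lemma esymm_eq_multiset {K m : ℕ} (v : Fin K → ℝ) :
    esymm m v = (Finset.univ.val.map v).esymm m :=
  (Finset.esymm_map_val v Finset.univ m).symm

lemma multiset_esymm_cons (a : ℝ) (s : Multiset ℝ) (n : ℕ) :
    (a ::ₘ s).esymm (n + 1) = a * s.esymm n + s.esymm (n + 1) := by
  unfold Multiset.esymm
  rw [Multiset.powersetCard_cons, Multiset.map_add, Multiset.sum_add, Multiset.map_map]
  simp only [Function.comp, Multiset.prod_cons]
  rw [← Multiset.sum_map_mul_left, add_comm]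

lemma esymm_rec {K' : ℕ} (v : Fin (K' + 1) → ℝ) (k : Fin (K' + 1)) (m : ℕ) :
    esymm (m + 1) v = v k * esymm m (v ∘ k.succAbove) + esymm (m + 1) (v ∘ k.succAbove) := by
  rw [esymm_eq_multiset, esymm_eq_multiset, esymm_eq_multiset]
  have h : (Finset.univ.val.map v : Multiset ℝ)
      = v k ::ₘ (Finset.univ.val.map (v ∘ k.succAbove)) := by
    rw [Fin.univ_succAbove K' k, Finset.cons_val, Multiset.map_cons, Finset.map_val,
      Multiset.map_map]
    rfl
  rw [h, multiset_esymm_cons]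

lemma esymm_zero' {K : ℕ} (v : Fin K → ℝ) : esymm 0 v = 1 := by
  simp [esymm]

lemma esymm_top {K' : ℕ} (w : Fin K' → ℝ) : esymm (K' + 1) w = 0 := by
  unfold esymm
  have h : (Finset.univ : Finset (Fin K')).powersetCard (K' + 1) = ∅ := by
    rw [Finset.powersetCard_eq_empty]
    simp
  rw [h]
  simp

/-- Recurrence relation: `D_{H,K}(v) = v(k)·D_{H,K−1}(v⁻ᵏ) − H·D_{H−1,K−1}(v⁻ᵏ)`,
for `H = H'+1 ≥ 1` and `K = K'+1 ≥ 1`. -/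
theorem D_recurrence (H' K' : ℕ) (v : Fin (K' + 1) → ℝ) (k : Fin (K' + 1)) :
    D (H' + 1) (K' + 1) v =
      v k * D (H' + 1) K' (v ∘ k.succAbove) - ((H' : ℝ) + 1) * D H' K' (v ∘ k.succAbove) := by
  set w := v ∘ k.succAbove with hw
  set A : ℝ := -((H' : ℝ) + 1) with hA
  have hAH : A = -(H' : ℝ) - 1 := by rw [hA]; ring
  -- LHS expansion
  have lhs :
      D (H' + 1) (K' + 1) v
        = (∑ j ∈ Finset.range (K' + 1), rise A (K' - j) * esymm (j + 1) v)
          + rise A (K' + 1) := by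
    unfold D
    rw [Finset.sum_range_succ' (fun m => rise (-((H' : ℕ) + 1 : ℕ) : ℝ) (K' + 1 - m) * esymm m v)]
    push_cast
    rw [esymm_zero', mul_one, ← hA]
  rw [lhs]
  have expand : ∀ j ∈ Finset.range (K' + 1),
      rise A (K' - j) * esymm (j + 1) v
        = rise A (K' - j) * (v k * esymm j w) + rise A (K' - j) * esymm (j + 1) w := by
    intro j _
    rw [esymm_rec v k j]; ring
  rw [Finset.sum_congr rfl expand, Finset.sum_add_distrib]
  -- first sum = v k * D (H'+1) K' w
  have first : (∑ j ∈ Finset.range (K' + 1), rise A (K' - j) * (v k * esymm j w))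
      = v k * D (H' + 1) K' w := by
    unfold D
    rw [Finset.mul_sum]
    apply Finset.sum_congr rfl
    intro j _
    rw [hA]
    push_cast
    ring_nf
  -- second sum + leading term = -(H'+1) * D H' K' w
  have second : (∑ j ∈ Finset.range (K' + 1), rise A (K' - j) * esymm (j + 1) w)
        + rise A (K' + 1)
      = -((H' : ℝ) + 1) * D H' K' w := by
    have key : ∀ m, rise A (K' + 1 - m) * esymm m w
        = (fun m => -((H' : ℝ) + 1) * (rise (-(H' : ℝ)) (K' - m) * esymm m w)) m ∨ m > K' := by
      intro m
      by_cases hm : m ≤ K'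
      · left
        have h1 : K' + 1 - m = (K' - m) + 1 := by omega
        rw [h1, rise_succ]
        have h2 : A + 1 = -(H' : ℝ) := by rw [hA]; ring
        rw [h2, hA]; ring
      · right; omega
    have rhs : -((H' : ℝ) + 1) * D H' K' w
        = ∑ m ∈ Finset.range (K' + 1), rise A (K' + 1 - m) * esymm m w := by
      unfold D
      rw [Finset.mul_sum]
      apply Finset.sum_congr rfl
      intro m hm
      rw [Finset.mem_range] at hm
      rcases key m with h | h
      · exact h.symm
      · omega
    rw [rhs, Finset.sum_range_succ' (fun m => rise A (K' + 1 - m) * esymm m w)]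
    rw [Finset.sum_range_succ (fun j => rise A (K' - j) * esymm (j + 1) w)]
    rw [esymm_zero', esymm_top]
    simp only [Nat.sub_zero, mul_one, Nat.sub_self, mul_zero, add_zero]
    congr 1
    apply Finset.sum_congr rfl
    intro j hj
    have : K' + 1 - (j + 1) = K' - j := by omega
    rw [this]
  rw [first, add_assoc, second]
  ring
end
end
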